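/- Characterization of the inverse data: let T ≥ 1 and let (r_0, r_1, …, r_{2T−2}) ∈ ℝ^{2T−1} with r_0 = 1. There exists a potential b : ℕ → ℝ such that u^δ_{1,s+1} = r_s for all s = 0, 1, …, 2T−2 (i.e., (r_0,…,r_{2T−2}) is the response vector of the system with potential b) if and only if the T×T matrix C^T with entries C^T_{ij} = Σ_{k=0}^{T−max(i,j)} r_{|i−j|+2k} is positive definite and det C^l = 1 for every 1 ≤ l ≤ T, where C^l is the l×l matrix with entries C^l_{ij} = Σ_{k=0}^{l−max(i,j)} r_{|i−j|+2k}. -/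

import Mathlib

/-!
The waves `u^δ_{·,t}`, `t = 1, …, l`, restricted to the sites `1, …, l` form an upper
unitriangular matrix `W` (finite speed of propagation), and a discrete Green identity for the
wave operator gives `Σ_n u^δ_{n,a} u^δ_{n,c} = Σ_{k < min(a,c)} r_{|a-c|+2k}`. Hence `C^l` is
`Wᵀ W` with the order of the indices reversed: positive definite, of determinant one, and
depending only on `r_0, …, r_{2l-2}`.

Conversely, once `b_1, …, b_{m-1}` are fixed, `b_m` enters `u^δ_{1,2m}` only through the term
`-b_m`, so the odd data `r_{2m-1} = u^δ_{1,2m}` can be matched one value of the potential at a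
time. The even data are then forced: `r_{2k}` occurs in `C^{k+1}` only in the corner entry, so
`det C^{k+1}` is affine in `r_{2k}` with slope `det C^k ≠ 0`, and the normalisation
`det C^{k+1} = 1` determines `r_{2k}`.
-/

/-- `sol b f t n` is the solution `u^f_{n,t}` of the discrete Schrödinger dynamical system
with potential `b` and boundary control `f`:
`u_{n,t+1} + u_{n,t-1} - u_{n+1,t} - u_{n-1,t} + b_n u_{n,t} = 0` for `n ≥ 1`, `t ≥ 0`,
`u_{n,-1} = u_{n,0} = 0` for `n ≥ 1`, and `u_{0,t} = f_t` for `t ≥ 0`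
(the first argument is the time `t`, the second the space variable `n`). -/
noncomputable def sol (b f : ℕ → ℝ) : ℕ → ℕ → ℝ
  | 0, n => if n = 0 then f 0 else 0
  | 1, n => if n = 0 then f 1 else
      sol b f 0 (n + 1) + sol b f 0 (n - 1) - b n * sol b f 0 n
  | (t + 2), n => if n = 0 then f (t + 2) else
      sol b f (t + 1) (n + 1) + sol b f (t + 1) (n - 1) - b n * sol b f (t + 1) n - sol b f t n

/-- The delta control: `δ_0 = 1`, `δ_t = 0` for `t ≥ 1`. -/
noncomputable def delta : ℕ → ℝ := fun t => if t = 0 then 1 else 0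

/-- The entries of the connecting matrix: `Cmat r T i j = Σ_{k=0}^{T - max i j} r_{|i-j| + 2k}`
(`i`, `j` are 1-based indices). -/
noncomputable def Cmat (r : ℕ → ℝ) (T i j : ℕ) : ℝ :=
  ∑ k ∈ Finset.range (T - max i j + 1), r (max i j - min i j + 2 * k)

open Finset
open scoped Matrix

section Solution

variable (b f : ℕ → ℝ)

lemma sol_boundary (t : ℕ) : sol b f t 0 = f t := by
  rcases t with _ | _ | t <;> simp [sol]

lemma sol_zero_of_ne_zero {n : ℕ} (hn : n ≠ 0) : sol b f 0 n = 0 := by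
  simp [sol, hn]

lemma sol_succ (t : ℕ) {n : ℕ} (hn : n ≠ 0) :
    sol b f (t + 1) n =
      sol b f t (n + 1) + sol b f t (n - 1) - b n * sol b f t n - sol b f (t - 1) n := by
  rcases t with _ | t <;> simp [sol, hn]

lemma sol_eq_zero_of_lt {t n : ℕ} (h : t < n) : sol b f t n = 0 := by
  induction t using Nat.strong_induction_on generalizing n with
  | _ t ih =>
    rcases t with _ | t
    · exact sol_zero_of_ne_zero b f (by omega)
    · rw [sol_succ b f t (by omega), ih t (by omega) (by omega), ih t (by omega) (by omega),
        ih t (by omega) (by omega), ih (t - 1) (by omega) (by omega)]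
      ring

lemma sol_delta_self (t : ℕ) : sol b delta t t = 1 := by
  induction t with
  | zero => simp [sol, delta]
  | succ t ih =>
    rw [sol_succ b delta t (by omega), sol_eq_zero_of_lt b delta (by omega : t < t + 1 + 1),
      sol_eq_zero_of_lt b delta (by omega : t < t + 1),
      sol_eq_zero_of_lt b delta (by omega : t - 1 < t + 1)]
    simpa using ih

end Solution

lemma sol_congr_potential {b b' : ℕ → ℝ} (f : ℕ → ℝ) {m : ℕ} (hb : ∀ i ≤ m, b i = b' i)
    {t n : ℕ} (h : n + t ≤ 2 * m + 2) : sol b f t n = sol b' f t n := by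
  induction t using Nat.strong_induction_on generalizing n with
  | _ t ih =>
    rcases t with _ | t
    · rcases n with _ | n <;> simp [sol]
    rcases n with _ | n
    · rw [sol_boundary, sol_boundary]
    rw [sol_succ b f t n.succ_ne_zero, sol_succ b' f t n.succ_ne_zero,
      ih t (by omega) (by omega : n + 1 + 1 + t ≤ _),
      ih t (by omega) (by omega : n + 1 - 1 + t ≤ _),
      ih (t - 1) (by omega) (by omega : n + 1 + (t - 1) ≤ _)]
    rcases le_or_gt (n + 1) m with hn | hn
    · rw [hb (n + 1) hn, ih t (by omega) (by omega : n + 1 + t ≤ _)]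
    · rw [sol_eq_zero_of_lt b f (by omega : t < n + 1),
        sol_eq_zero_of_lt b' f (by omega : t < n + 1), mul_zero, mul_zero]

/-- Along the characteristic `n + t = 2m + 1` issuing from `(m, m + 1)`, the potential `b_m`
enters `u^δ` only through the term `-b_m u^δ_{m,m} = -b_m`. -/
lemma sol_delta_sub_sol_delta_of_eq_of_lt {b b' : ℕ → ℝ} {m : ℕ} (hb : ∀ i < m, b i = b' i)
    {k : ℕ} (hk : k < m) :
    sol b delta (m + 1 + k) (m - k) - sol b' delta (m + 1 + k) (m - k) = b' m - b m := by
  have hcongr : ∀ {t n}, n + t ≤ 2 * m → sol b delta t n = sol b' delta t n :=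
    fun h => sol_congr_potential delta (m := m - 1) (fun i hi => hb i (by omega)) (by omega)
  induction k with
  | zero =>
    rw [Nat.add_zero, Nat.sub_zero, sol_succ b delta m (by omega), sol_succ b' delta m (by omega),
      sol_eq_zero_of_lt b delta (by omega : m < m + 1),
      sol_eq_zero_of_lt b' delta (by omega : m < m + 1),
      sol_eq_zero_of_lt b delta (by omega : m - 1 < m),
      sol_eq_zero_of_lt b' delta (by omega : m - 1 < m),
      hcongr (by omega : m - 1 + m ≤ _), sol_delta_self, sol_delta_self]
    ring
  | succ k ih =>
    rw [show m + 1 + (k + 1) = m + 1 + k + 1 by omega, sol_succ b delta _ (by omega),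
      sol_succ b' delta _ (by omega), show m - (k + 1) + 1 = m - k by omega,
      hcongr (by omega : m - (k + 1) - 1 + (m + 1 + k) ≤ _),
      hcongr (by omega : m - (k + 1) + (m + 1 + k) ≤ _),
      hcongr (by omega : m - (k + 1) + (m + 1 + k - 1) ≤ _), hb (m - (k + 1)) (by omega)]
    linarith [ih (by omega)]

noncomputable def response (b : ℕ → ℝ) (s : ℕ) : ℝ := sol b delta (s + 1) 1

section WaveInner

variable (b : ℕ → ℝ)

noncomputable def waveInner (N a c : ℕ) : ℝ :=
  ∑ n ∈ range N, sol b delta a (n + 1) * sol b delta c (n + 1)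

lemma waveInner_eq_waveInner_of_le {a N M : ℕ} (c : ℕ) (ha : a ≤ N) (hNM : N ≤ M) :
    waveInner b N a c = waveInner b M a c := by
  refine sum_subset (range_subset_range.2 hNM) fun n hnM hnN => ?_
  rw [sol_eq_zero_of_lt b delta (by simp at hnN; omega), zero_mul]

lemma waveInner_zero_left (N c : ℕ) : waveInner b N 0 c = 0 :=
  sum_eq_zero fun n _ => by rw [sol_zero_of_ne_zero b delta n.succ_ne_zero, zero_mul]

lemma waveInner_zero_right (N a : ℕ) : waveInner b N a 0 = 0 :=
  sum_eq_zero fun n _ => by rw [sol_zero_of_ne_zero b delta n.succ_ne_zero, mul_zero]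

lemma waveInner_one_right {N : ℕ} (a : ℕ) (hN : 1 ≤ N) : waveInner b N a 1 = sol b delta a 1 := by
  rw [waveInner, sum_eq_single_of_mem 0 (mem_range.2 hN), sol_delta_self, mul_one]
  intro n _ hn
  rw [sol_eq_zero_of_lt b delta (by omega : 1 < n + 1), mul_zero]

/-- Green's identity for the discrete wave operator: the summands telescope. -/
lemma waveInner_wave {N a : ℕ} (c : ℕ) (ha : a + 2 ≤ N) :
    waveInner b N (a + 2) (c + 1) + waveInner b N a (c + 1) =
      waveInner b N (a + 1) (c + 2) + waveInner b N (a + 1) c := by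
  let F : ℕ → ℝ := fun n => sol b delta (a + 1) (n + 1) * sol b delta (c + 1) n -
    sol b delta (a + 1) n * sol b delta (c + 1) (n + 1)
  have hstep : ∀ n, (sol b delta (a + 2) (n + 1) + sol b delta a (n + 1)) *
      sol b delta (c + 1) (n + 1) - sol b delta (a + 1) (n + 1) *
      (sol b delta (c + 2) (n + 1) + sol b delta c (n + 1)) = F (n + 1) - F n := by
    intro n
    rw [sol_succ b delta (a + 1) (by omega : n + 1 ≠ 0),
      sol_succ b delta (c + 1) (by omega : n + 1 ≠ 0)]
    simp only [F, Nat.add_sub_cancel]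
    ring
  have hF0 : F 0 = 0 := by simp [F, sol_boundary, delta]
  have hFN : F N = 0 := by
    simp only [F, sol_eq_zero_of_lt b delta (by omega : a + 1 < N + 1),
      sol_eq_zero_of_lt b delta (by omega : a + 1 < N)]
    ring
  rw [← sub_eq_zero]
  calc _ = ∑ n ∈ range N, (F (n + 1) - F n) := by
        simp only [waveInner, ← sum_add_distrib, ← sum_sub_distrib, ← hstep]
        exact sum_congr rfl fun n _ => by ring
    _ = 0 := by rw [sum_range_sub, hFN, hF0, sub_zero]

lemma waveInner_succ_succ {N a : ℕ} (c : ℕ) (hN : a + c + 2 ≤ N) :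
    waveInner b N (a + 1) (c + 1) = waveInner b N a c + response b (a + c) := by
  induction c generalizing a with
  | zero =>
    rw [waveInner_one_right b _ (by omega), waveInner_zero_right, zero_add]
    rfl
  | succ c ih =>
    have hwave := waveInner_wave b c (by omega : a + 2 ≤ N)
    have hdiag := ih (a := a + 1) (by omega)
    rw [show a + 1 + c = a + (c + 1) by omega] at hdiag
    linarith

lemma waveInner_eq_sum_response {N a : ℕ} (c : ℕ) (ha : a ≤ N) :
    waveInner b N a c = ∑ k ∈ range (min a c), response b (max a c - min a c + 2 * k) := by
  rw [waveInner_eq_waveInner_of_le b c ha (N.le_add_right c)]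
  suffices h : ∀ a c M, a + c ≤ M → waveInner b M a c =
      ∑ k ∈ range (min a c), response b (max a c - min a c + 2 * k) from h a c _ (by omega)
  intro a
  induction a with
  | zero => simp [waveInner_zero_left]
  | succ a ih =>
    rintro (_ | c) M hM
    · simp [waveInner_zero_right]
    rw [waveInner_succ_succ b c (by omega), ih c M (by omega),
      show min (a + 1) (c + 1) = min a c + 1 by omega,
      show max (a + 1) (c + 1) - (min a c + 1) = max a c - min a c by omega, sum_range_succ]
    congr 2
    omega

end WaveInner

noncomputable def connectingMatrix (r : ℕ → ℝ) (l : ℕ) : Matrix (Fin l) (Fin l) ℝ :=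
  Matrix.of fun i j => Cmat r l ((i : ℕ) + 1) ((j : ℕ) + 1)

section ConnectingMatrixOfResponse

variable (b : ℕ → ℝ) (l : ℕ)

/-- The matrix `(u^δ_{i,j})` of the first `l` waves at the first `l` sites (rows `i`, columns
`j`): upper unitriangular by finite speed of propagation. -/
noncomputable def waveMatrix : Matrix (Fin l) (Fin l) ℝ :=
  Matrix.of fun i j => sol b delta ((j : ℕ) + 1) ((i : ℕ) + 1)

lemma det_waveMatrix : (waveMatrix b l).det = 1 := by
  rw [Matrix.det_of_isUpperTriangular (M := waveMatrix b l)
    fun i j hij => sol_eq_zero_of_lt b delta (by simpa using hij)]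
  exact prod_eq_one fun i _ => sol_delta_self b _

lemma connectingMatrix_response :
    connectingMatrix (response b) l =
      ((waveMatrix b l)ᵀ * waveMatrix b l).submatrix Fin.rev Fin.rev := by
  ext i j
  have hmul : ((waveMatrix b l)ᵀ * waveMatrix b l) (Fin.rev i) (Fin.rev j) =
      waveInner b l ((Fin.rev i : ℕ) + 1) ((Fin.rev j : ℕ) + 1) := by
    rw [Matrix.mul_apply, waveInner, ← Fin.sum_univ_eq_sum_range]
    rfl
  rw [Matrix.submatrix_apply, hmul, waveInner_eq_sum_response b _ (by omega), Fin.val_rev,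
    Fin.val_rev,
    show min (l - (i + 1) + 1) (l - (j + 1) + 1) = l - max ((i : ℕ) + 1) (j + 1) + 1 by omega,
    show max (l - (i + 1) + 1) (l - (j + 1) + 1) - (l - max ((i : ℕ) + 1) (j + 1) + 1) =
      max ((i : ℕ) + 1) (j + 1) - min ((i : ℕ) + 1) (j + 1) by omega]
  rfl

lemma det_connectingMatrix_response : (connectingMatrix (response b) l).det = 1 := by
  rw [connectingMatrix_response]
  refine (Matrix.det_submatrix_equiv_self Fin.revPerm _).trans ?_
  rw [Matrix.det_mul, Matrix.det_transpose, det_waveMatrix, mul_one]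

lemma posDef_connectingMatrix_response : (connectingMatrix (response b) l).PosDef := by
  have hinj : Function.Injective (waveMatrix b l).mulVec := by
    rw [Matrix.mulVec_injective_iff_isUnit, Matrix.isUnit_iff_isUnit_det, det_waveMatrix]
    exact isUnit_one
  rw [connectingMatrix_response, ← Matrix.conjTranspose_eq_transpose_of_trivial]
  exact (Matrix.PosDef.conjTranspose_mul_self _ hinj).submatrix Fin.rev_injective

end ConnectingMatrixOfResponse

lemma Matrix.det_updateRow_zero_add_single {R : Type*} [CommRing R] {n : ℕ}
    (M : Matrix (Fin (n + 1)) (Fin (n + 1)) R) (d : R) :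
    (M.updateRow 0 (M 0 + Pi.single 0 d)).det =
      M.det + d * (M.submatrix Fin.succ Fin.succ).det := by
  rw [Matrix.det_updateRow_add, Matrix.updateRow_eq_self, ← mul_one d, ← smul_eq_mul d 1,
    Pi.single_smul', Matrix.det_updateRow_smul, ← Matrix.adjugate_apply,
    Matrix.adjugate_fin_succ_eq_det_submatrix, Fin.succAbove_zero]
  simp

section Uniqueness

variable {r r' : ℕ → ℝ}

lemma Cmat_congr {l i j : ℕ} (hi : i ≤ l) (hj : j ≤ l) (hr : ∀ s ≤ 2 * l - i - j, r s = r' s) :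
    Cmat r l i j = Cmat r' l i j :=
  sum_congr rfl fun k hk => hr _ (by simp at hk; omega)

lemma Cmat_succ_succ (r : ℕ → ℝ) (l i j : ℕ) : Cmat r (l + 1) (i + 1) (j + 1) = Cmat r l i j := by
  simp only [Cmat, Nat.add_max_add_right, Nat.add_min_add_right, Nat.add_sub_add_right]

lemma connectingMatrix_congr {l : ℕ} (hr : ∀ s ≤ 2 * l - 2, r s = r' s) :
    connectingMatrix r l = connectingMatrix r' l :=
  Matrix.ext fun i j => Cmat_congr (by omega) (by omega) fun s hs => hr s (by omega)

/-- `r_{2k}` enters `C^{k+1}` only through its corner entry `C^{k+1}_{11}`. -/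
lemma det_connectingMatrix_succ {k : ℕ} (hr : ∀ s < 2 * k, r s = r' s) :
    (connectingMatrix r (k + 1)).det =
      (connectingMatrix r' (k + 1)).det +
        (r (2 * k) - r' (2 * k)) * (connectingMatrix r' k).det := by
  have hminor :
      (connectingMatrix r' (k + 1)).submatrix Fin.succ Fin.succ = connectingMatrix r' k :=
    Matrix.ext fun i j => Cmat_succ_succ r' k _ _
  rw [← hminor, ← Matrix.det_updateRow_zero_add_single]
  congr 1
  ext i j
  rcases eq_or_ne i 0 with rfl | hi
  · rw [Matrix.updateRow_self]
    rcases eq_or_ne j 0 with rfl | hj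
    · simp only [connectingMatrix, Cmat, Pi.add_apply, Pi.single_eq_same, Matrix.of_apply,
        Fin.val_zero, zero_add, max_self, min_self, Nat.sub_self, add_tsub_cancel_right,
        sum_range_succ]
      rw [sum_congr rfl fun s hs => hr (2 * s) (by simp at hs; omega)]
      ring
    · rw [Pi.add_apply, Pi.single_eq_of_ne hj, add_zero]
      have := Fin.val_ne_zero_iff.2 hj
      exact Cmat_congr (by omega) (by omega) fun s hs => hr s (by omega)
  · rw [Matrix.updateRow_ne hi]
    have := Fin.val_ne_zero_iff.2 hi
    exact Cmat_congr (by omega) (by omega) fun s hs => hr s (by omega)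

lemma eq_of_det_connectingMatrix_eq {T : ℕ} (hT : 1 ≤ T)
    (hodd : ∀ m, r (2 * m + 1) = r' (2 * m + 1))
    (hdet : ∀ l, 1 ≤ l → l ≤ T → (connectingMatrix r l).det = (connectingMatrix r' l).det)
    (hdet' : ∀ l < T, (connectingMatrix r l).det ≠ 0) {s : ℕ} (hs : s ≤ 2 * T - 2) :
    r s = r' s := by
  induction s using Nat.strong_induction_on with
  | _ s ih =>
    obtain ⟨m, rfl | rfl⟩ := Nat.even_or_odd' s
    · have hexp := det_connectingMatrix_succ (r := r') (r' := r) (k := m)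
        fun s hs => (ih s hs (by omega)).symm
      rw [← hdet (m + 1) (by omega) (by omega), left_eq_add, mul_eq_zero] at hexp
      exact (sub_eq_zero.1 (hexp.resolve_right (hdet' m (by omega)))).symm
    · exact hodd m

end Uniqueness

/-- Switching on `b_m` (the `b_i`, `i < m`, being fixed) shifts `u^δ_{1,2m}` by `-b_m`
(`sol_delta_sub_sol_delta_of_eq_of_lt`), so this choice gives `u^δ_{1,2m} = r_{2m-1}`. -/
noncomputable def inversePotential (r : ℕ → ℝ) : ℕ → ℝ
  | m => sol (fun i => if i < m then inversePotential r i else 0) delta (2 * m) 1 - r (2 * m - 1)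

lemma response_inversePotential_odd (r : ℕ → ℝ) (m : ℕ) :
    response (inversePotential r) (2 * m + 1) = r (2 * m + 1) := by
  set b' : ℕ → ℝ := fun i => if i < m + 1 then inversePotential r i else 0
  have hdef : inversePotential r (m + 1) = sol b' delta (2 * (m + 1)) 1 - r (2 * m + 1) := by
    rw [inversePotential]
    rfl
  have hedge := sol_delta_sub_sol_delta_of_eq_of_lt (b := inversePotential r) (b' := b')
    (m := m + 1) (fun i hi => (if_pos hi).symm) (Nat.lt_succ_self m)
  rw [show m + 1 + 1 + m = 2 * (m + 1) by omega, show m + 1 - m = 1 by omega,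
    show b' (m + 1) = 0 from if_neg (lt_irrefl _)] at hedge
  rw [response, show 2 * m + 1 + 1 = 2 * (m + 1) by omega]
  linarith

theorem characterization_inverse_data_general (T : ℕ) (hT : 1 ≤ T) (r : ℕ → ℝ) :
    (∃ b : ℕ → ℝ, ∀ s, s ≤ 2 * T - 2 → sol b delta (s + 1) 1 = r s) ↔
      ((Matrix.of fun i j : Fin T => Cmat r T ((i : ℕ) + 1) ((j : ℕ) + 1)).PosDef ∧
       (∀ l, 1 ≤ l → l ≤ T →
        (Matrix.of fun i j : Fin l => Cmat r l ((i : ℕ) + 1) ((j : ℕ) + 1)).det = 1)) := by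
  change _ ↔ (connectingMatrix r T).PosDef ∧ ∀ l, 1 ≤ l → l ≤ T → (connectingMatrix r l).det = 1
  constructor
  · rintro ⟨b, hb⟩
    have hC : ∀ l ≤ T, connectingMatrix (response b) l = connectingMatrix r l :=
      fun l hl => connectingMatrix_congr fun s hs => hb s (by omega)
    exact ⟨hC T le_rfl ▸ posDef_connectingMatrix_response b T,
      fun l _ hl => hC l hl ▸ det_connectingMatrix_response b l⟩
  · rintro ⟨-, hdet⟩
    refine ⟨inversePotential r, fun s hs => eq_of_det_connectingMatrix_eq hT
      (response_inversePotential_odd r) (fun l hl hlT => ?_) (fun l _ => ?_) hs⟩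
    · rw [det_connectingMatrix_response, hdet l hl hlT]
    · rw [det_connectingMatrix_response]
      exact one_ne_zero

/-- Characterization of the inverse data: `(1, r_1, …, r_{2T-2})` is a response vector of the
discrete Schrödinger dynamical system for some potential iff the connecting matrix `C^T` is
positive definite and `det C^l = 1` for every `1 ≤ l ≤ T`. -/
theorem characterization_inverse_data (T : ℕ) (hT : 1 ≤ T) (r : ℕ → ℝ) (hr0 : r 0 = 1) :
    (∃ b : ℕ → ℝ, ∀ s, s ≤ 2 * T - 2 → sol b delta (s + 1) 1 = r s) ↔
      ((Matrix.of fun i j : Fin T => Cmat r T ((i : ℕ) + 1) ((j : ℕ) + 1)).PosDef ∧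
       (∀ l, 1 ≤ l → l ≤ T →
        (Matrix.of fun i j : Fin l => Cmat r l ((i : ℕ) + 1) ((j : ℕ) + 1)).det = 1)) :=
  characterization_inverse_data_general T hT r
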